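/- For z in the upper half-plane, the Jacobi theta function satisfies the transformation law θ(-1/(4z)) = √(2z/i) · θ(z), where the square root is the principal branch. -/
import Mathlib

open Complex

/-- The Jacobi theta function `θ(z) = ∑_{n ∈ ℤ} exp(2πin²z)`. -/
noncomputable def jacobiThetaFn (z : ℂ) : ℂ :=
  ∑' n : ℤ, Complex.exp (2 * Real.pi * Complex.I * (n : ℂ) ^ 2 * z)

lemma jacobiThetaFn_eq (z : ℂ) : jacobiThetaFn z = jacobiTheta (2 * z) := by
  unfold jacobiThetaFn jacobiTheta
  congr 1; ext n; ring_nf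

/-- Transformation law: `θ(-1/(4z)) = √(2z/i) · θ(z)` for `z` in the upper half-plane,
with the principal branch of the square root. -/
theorem jacobiTheta_transform (z : ℂ) (hz : 0 < z.im) :
    jacobiThetaFn (-1 / (4 * z)) = (2 * z / Complex.I) ^ ((1 : ℂ) / 2) * jacobiThetaFn z := by
  have h2z : (0 : ℝ) < (2 * z).im := by simp [mul_im]; linarith
  set τ : UpperHalfPlane := ⟨2 * z, h2z⟩ with hτ
  have hS := jacobiTheta_S_smul τ
  rw [UpperHalfPlane.modular_S_smul] at hS
  have hz0 : z ≠ 0 := fun h => by simp [h] at hz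
  have h1 : (2 * (-1 / (4 * z))) = -((τ : ℂ))⁻¹ := by
    simp only [hτ, UpperHalfPlane.coe_mk]
    field_simp
    ring
  have h2 : (-I * (τ : ℂ)) = 2 * z / I := by
    show -I * ((2:ℂ) * z) = 2 * z / I
    rw [div_I]; ring
  rw [jacobiThetaFn_eq, jacobiThetaFn_eq, h1]
  simpa [h2, inv_neg, UpperHalfPlane.coe_mk] using hS
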